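/- Let a = (a₁,a₂,a₃,a₄) ∈ ℝ⁴ and φ = (φ₁,φ₂,φ₃,φ₄) ∈ ℝ⁴, and suppose it is NOT the case that a₁ = 0, a₄ = 0, and a₂·a₃ = 0. Let S = {ε ≥ 0 : ∃ x ∈ ℝ², det(1 + ε • H(x)) ≤ 0}. Then S is nonempty, ε_crit = inf S is strictly positive, and the infimum is attained: ε_crit ∈ S, i.e., there exists x ∈ ℝ² with det(1 + ε_crit • H(x)) ≤ 0. -/
import Mathlib

/-- The rescaled Jacobian `H` of the nonlinearity of the 2D torus map. -/
noncomputable def Hmat (a₁ a₂ a₃ a₄ φ₁ φ₂ φ₃ φ₄ x₁ x₂ : ℝ) : Matrix (Fin 2) (Fin 2) ℝ :=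
  -!![a₁ * Real.sin (2 * Real.pi * (x₁ + φ₁)), a₂ * Real.sin (2 * Real.pi * (x₂ + φ₂));
      a₃ * Real.sin (2 * Real.pi * (x₁ + φ₃)), a₄ * Real.sin (2 * Real.pi * (x₂ + φ₄))]

noncomputable def gfun (a₁ a₂ a₃ a₄ φ₁ φ₂ φ₃ φ₄ ε x₁ x₂ : ℝ) : ℝ :=
  (1 - ε * (a₁ * Real.sin (2 * Real.pi * (x₁ + φ₁)))) *
    (1 - ε * (a₄ * Real.sin (2 * Real.pi * (x₂ + φ₄)))) -
  (ε * (a₂ * Real.sin (2 * Real.pi * (x₂ + φ₂)))) *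
    (ε * (a₃ * Real.sin (2 * Real.pi * (x₁ + φ₃))))

lemma det_eq (a₁ a₂ a₃ a₄ φ₁ φ₂ φ₃ φ₄ ε x₁ x₂ : ℝ) :
    ((1 : Matrix (Fin 2) (Fin 2) ℝ) + ε • Hmat a₁ a₂ a₃ a₄ φ₁ φ₂ φ₃ φ₄ x₁ x₂).det
      = gfun a₁ a₂ a₃ a₄ φ₁ φ₂ φ₃ φ₄ ε x₁ x₂ := by
  simp [Hmat, gfun, Matrix.det_fin_two, Matrix.one_apply]
  ring

lemma sin_fract (x φ : ℝ) :
    Real.sin (2 * Real.pi * (Int.fract x + φ)) = Real.sin (2 * Real.pi * (x + φ)) := by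
  rw [Int.fract]
  have h : 2 * Real.pi * (x - ⌊x⌋ + φ) = 2 * Real.pi * (x + φ) - (⌊x⌋ : ℤ) * (2 * Real.pi) := by
    ring
  rw [h, Real.sin_sub_int_mul_two_pi]

lemma exists_sin_abs (b φ : ℝ) : ∃ x : ℝ, b * Real.sin (2 * Real.pi * (x + φ)) = |b| := by
  rcases le_or_gt 0 b with hb | hb
  · refine ⟨1/4 - φ, ?_⟩
    have : 2 * Real.pi * (1/4 - φ + φ) = Real.pi / 2 := by ring
    rw [this, Real.sin_pi_div_two, abs_of_nonneg hb, mul_one]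
  · refine ⟨-(1/4) - φ, ?_⟩
    have : 2 * Real.pi * (-(1/4) - φ + φ) = -(Real.pi / 2) := by ring
    rw [this, Real.sin_neg, Real.sin_pi_div_two, abs_of_neg hb]
    ring

lemma sin_zero_pt (φ : ℝ) : Real.sin (2 * Real.pi * (-φ + φ)) = 0 := by
  simp

lemma gfun_continuous (a₁ a₂ a₃ a₄ φ₁ φ₂ φ₃ φ₄ : ℝ) :
    Continuous (fun p : ℝ × ℝ × ℝ => gfun a₁ a₂ a₃ a₄ φ₁ φ₂ φ₃ φ₄ p.1 p.2.1 p.2.2) := by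
  unfold gfun
  fun_prop

/-- Unless `a₁ = a₄ = 0` and `a₂ a₃ = 0`, the critical amplitude exists,
is strictly positive, and is attained. -/
theorem epsCrit_exists_pos_attained (a₁ a₂ a₃ a₄ φ₁ φ₂ φ₃ φ₄ : ℝ)
    (ha : ¬(a₁ = 0 ∧ a₄ = 0 ∧ a₂ * a₃ = 0)) :
    ∀ S : Set ℝ,
      S = {ε : ℝ | 0 ≤ ε ∧ ∃ x₁ x₂ : ℝ,
        ((1 : Matrix (Fin 2) (Fin 2) ℝ) + ε • Hmat a₁ a₂ a₃ a₄ φ₁ φ₂ φ₃ φ₄ x₁ x₂).det ≤ 0} →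
      S.Nonempty ∧ 0 < sInf S ∧ sInf S ∈ S := by
  intro S hS
  set g : ℝ → ℝ → ℝ → ℝ := gfun a₁ a₂ a₃ a₄ φ₁ φ₂ φ₃ φ₄ with hg
  have hSet : S = {ε : ℝ | 0 ≤ ε ∧ ∃ x₁ x₂ : ℝ, g ε x₁ x₂ ≤ 0} := by
    rw [hS]; simp only [det_eq, hg]
  clear hS
  -- Nonemptiness
  have hne : ∃ ε : ℝ, 0 < ε ∧ ∃ x₁ x₂ : ℝ, g ε x₁ x₂ ≤ 0 := by
    by_cases h1 : a₁ ≠ 0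
    · obtain ⟨x₁, hx₁⟩ := exists_sin_abs a₁ φ₁
      refine ⟨|a₁|⁻¹, by positivity, x₁, -φ₂, ?_⟩
      simp only [hg, gfun, hx₁, sin_zero_pt, mul_zero, zero_mul, sub_zero,
        inv_mul_cancel₀ (abs_ne_zero.mpr h1)]
      simp
    · push_neg at h1
      by_cases h4 : a₄ ≠ 0
      · obtain ⟨x₂, hx₂⟩ := exists_sin_abs a₄ φ₄
        refine ⟨|a₄|⁻¹, by positivity, -φ₃, x₂, ?_⟩
        simp only [hg, gfun, hx₂, sin_zero_pt, mul_zero, zero_mul, mul_zero,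
          inv_mul_cancel₀ (abs_ne_zero.mpr h4)]
        simp
      · push_neg at h4
        have h23 : a₂ * a₃ ≠ 0 := by tauto
        have h2 : a₂ ≠ 0 := left_ne_zero_of_mul h23
        have h3 : a₃ ≠ 0 := right_ne_zero_of_mul h23
        obtain ⟨x₂, hx₂⟩ := exists_sin_abs a₂ φ₂
        obtain ⟨x₁, hx₁⟩ := exists_sin_abs a₃ φ₃
        have hP : 0 < |a₂| * |a₃| := mul_pos (abs_pos.mpr h2) (abs_pos.mpr h3)
        have hspos : 0 < Real.sqrt (|a₂| * |a₃|) := Real.sqrt_pos.mpr hP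
        refine ⟨(Real.sqrt (|a₂| * |a₃|))⁻¹, inv_pos.mpr hspos, x₁, x₂, ?_⟩
        have hsq : Real.sqrt (|a₂| * |a₃|) * Real.sqrt (|a₂| * |a₃|) = |a₂| * |a₃| :=
          Real.mul_self_sqrt hP.le
        have key : ((Real.sqrt (|a₂| * |a₃|))⁻¹ * |a₂|) * ((Real.sqrt (|a₂| * |a₃|))⁻¹ * |a₃|)
            = 1 := by
          have h' : ((Real.sqrt (|a₂| * |a₃|))⁻¹ * |a₂|) * ((Real.sqrt (|a₂| * |a₃|))⁻¹ * |a₃|)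
              = (Real.sqrt (|a₂| * |a₃|) * Real.sqrt (|a₂| * |a₃|))⁻¹ * (|a₂| * |a₃|) := by
            ring
          rw [h', hsq, inv_mul_cancel₀ (ne_of_gt hP)]
        simp only [hg, gfun, hx₁, hx₂, h1, h4, zero_mul, mul_zero, sub_zero, one_mul]
        nlinarith [key]
  obtain ⟨ε₀, hε₀, hx₀⟩ := hne
  have hSne : S.Nonempty := ⟨ε₀, by rw [hSet]; exact ⟨hε₀.le, hx₀⟩⟩
  have hBdd : BddBelow S := ⟨0, fun ε hε => by rw [hSet] at hε; exact hε.1⟩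
  -- lower bound
  set K : ℝ := |a₁| + |a₂| + |a₃| + |a₄| with hKdef
  have habs1 : 0 ≤ |a₁| := abs_nonneg a₁
  have habs2 : 0 ≤ |a₂| := abs_nonneg a₂
  have habs3 : 0 ≤ |a₃| := abs_nonneg a₃
  have habs4 : 0 ≤ |a₄| := abs_nonneg a₄
  have hK : 0 < K := by
    by_contra hle
    push_neg at hle
    have h1 : a₁ = 0 := abs_eq_zero.mp (le_antisymm (by linarith) habs1)
    have h2 : a₂ = 0 := abs_eq_zero.mp (le_antisymm (by linarith) habs2)
    have h4 : a₄ = 0 := abs_eq_zero.mp (le_antisymm (by linarith) habs4)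
    exact ha ⟨h1, h4, by rw [h2]; ring⟩
  have hlb : ∀ ε ∈ S, 1 / (2 * K) ≤ ε := by
    intro ε hε
    rw [hSet] at hε
    obtain ⟨hε0, x₁, x₂, hdet⟩ := hε
    by_contra hlt
    push_neg at hlt
    rw [lt_div_iff₀ (by positivity)] at hlt
    have hεK : ε * K < 1 / 2 := by nlinarith
    have hbound : ∀ (b y : ℝ), |b| ≤ K → |ε * (b * Real.sin y)| < 1 / 2 := by
      intro b y hb
      have hsin : |Real.sin y| ≤ 1 := abs_le.mpr ⟨Real.neg_one_le_sin y, Real.sin_le_one y⟩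
      have h1 : |ε * (b * Real.sin y)| = ε * (|b| * |Real.sin y|) := by
        rw [abs_mul, abs_mul, abs_of_nonneg hε0]
      rw [h1]
      have h2 : |b| * |Real.sin y| ≤ K :=
        le_trans (mul_le_of_le_one_right (abs_nonneg b) hsin) hb
      calc ε * (|b| * |Real.sin y|) ≤ ε * K := mul_le_mul_of_nonneg_left h2 hε0
        _ < 1 / 2 := hεK
    have HA := abs_lt.mp (hbound a₁ (2 * Real.pi * (x₁ + φ₁)) (by linarith))
    have HB := abs_lt.mp (hbound a₂ (2 * Real.pi * (x₂ + φ₂)) (by linarith))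
    have HC := abs_lt.mp (hbound a₃ (2 * Real.pi * (x₁ + φ₃)) (by linarith))
    have HD := abs_lt.mp (hbound a₄ (2 * Real.pi * (x₂ + φ₄)) (by linarith))
    simp only [hg, gfun] at hdet
    set u := ε * (a₁ * Real.sin (2 * Real.pi * (x₁ + φ₁))) with hu
    set v := ε * (a₄ * Real.sin (2 * Real.pi * (x₂ + φ₄))) with hv
    set w := ε * (a₂ * Real.sin (2 * Real.pi * (x₂ + φ₂))) with hw
    set z := ε * (a₃ * Real.sin (2 * Real.pi * (x₁ + φ₃))) with hz
    obtain ⟨hu1, hu2⟩ := HA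
    obtain ⟨hw1, hw2⟩ := HB
    obtain ⟨hz1, hz2⟩ := HC
    obtain ⟨hv1, hv2⟩ := HD
    have hpq : (1 : ℝ) / 4 < (1 - u) * (1 - v) := by nlinarith
    have hwz : w * z < 1 / 4 := by nlinarith
    linarith
  have hInfPos : 0 < sInf S := lt_of_lt_of_le (by positivity) (le_csInf hSne hlb)
  -- closedness
  have hclosed : IsClosed S := by
    have hSeq : S = Set.Ici (0 : ℝ) ∩
        (Prod.fst '' {p : ℝ × (↥(Set.Icc (0:ℝ) 1) × ↥(Set.Icc (0:ℝ) 1)) |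
          g p.1 (p.2.1 : ℝ) (p.2.2 : ℝ) ≤ 0}) := by
      rw [hSet]
      ext ε
      simp only [Set.mem_setOf_eq, Set.mem_inter_iff, Set.mem_Ici]
      constructor
      · rintro ⟨hε0, x₁, x₂, hle⟩
        refine ⟨hε0, ⟨(ε, (⟨Int.fract x₁, Int.fract_nonneg x₁, (Int.fract_lt_one x₁).le⟩,
          ⟨Int.fract x₂, Int.fract_nonneg x₂, (Int.fract_lt_one x₂).le⟩)), ?_, rfl⟩⟩
        show g ε (Int.fract x₁) (Int.fract x₂) ≤ 0
        simp only [hg, gfun, sin_fract]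
        exact hle
      · rintro ⟨hε0, ⟨⟨ε', y₁, y₂⟩, hp, rfl⟩⟩
        exact ⟨hε0, y₁.1, y₂.1, hp⟩
    rw [hSeq]
    refine isClosed_Ici.inter (isClosedMap_fst_of_compactSpace _ ?_)
    have hc : Continuous (fun p : ℝ × (↥(Set.Icc (0:ℝ) 1) × ↥(Set.Icc (0:ℝ) 1)) =>
        g p.1 (p.2.1 : ℝ) (p.2.2 : ℝ)) := by
      have h0 := gfun_continuous a₁ a₂ a₃ a₄ φ₁ φ₂ φ₃ φ₄
      refine h0.comp (Continuous.prodMk continuous_fst (Continuous.prodMk ?_ ?_))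
      · exact continuous_subtype_val.comp (continuous_fst.comp continuous_snd)
      · exact continuous_subtype_val.comp (continuous_snd.comp continuous_snd)
    exact isClosed_le hc continuous_const
  exact ⟨hSne, hInfPos, hclosed.csInf_mem hSne hBdd⟩
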